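/- Let φ be either an anisotropic quasi-Pfister form or an anisotropic quasi-Pfister neighbor over F, and let x ∈ F×. Then φ ⊗ ⟨1, x, x², …, x^{p−1}⟩ is isotropic over F if and only if x ∈ N_F(φ). -/

import Mathlib

/-!
Diagonal quasilinear `p`-forms over a field `F` of characteristic `p`,
following Hoffmann and Zemková. A form of dimension `n` is recorded by its
coefficient tuple `a : ι → F` (for a finite index type `ι`), the form being
`x ↦ ∑ i, a i * (x i)^p`.
-/

universe u

namespace QLF

open scoped BigOperators

/-- Evaluation of the diagonal quasilinear `p`-form with coefficients `a` at `x`. -/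
def eval (p : ℕ) {F : Type*} [CommRing F] {ι : Type*} [Fintype ι]
    (a : ι → F) (x : ι → F) : F :=
  ∑ i, a i * x i ^ p

/-- A form is isotropic if it has a nontrivial zero. -/
def Isotropic (p : ℕ) {F : Type*} [CommRing F] {ι : Type*} [Fintype ι] (a : ι → F) : Prop :=
  ∃ x : ι → F, x ≠ 0 ∧ eval p a x = 0

/-- A form is anisotropic if it has no nontrivial zero. -/
def Anisotropic (p : ℕ) {F : Type*} [CommRing F] {ι : Type*} [Fintype ι] (a : ι → F) : Prop :=
  ¬ Isotropic p a

/-- In characteristic `p`, the zero set of a diagonal quasilinear `p`-form is a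
linear subspace. -/
def zeroSubmodule (p : ℕ) [Fact p.Prime] {F : Type*} [Field F] [CharP F p]
    {ι : Type*} [Fintype ι] (a : ι → F) : Submodule F (ι → F) where
  carrier := {x | eval p a x = 0}
  zero_mem' := by
    have hp : p ≠ 0 := (Fact.out : p.Prime).ne_zero
    simp [eval, zero_pow hp]
  add_mem' := by
    intro x y hx hy
    haveI : ExpChar F p := .prime Fact.out
    have hxy : eval p a (x + y) = eval p a x + eval p a y := by
      simp only [eval, Pi.add_apply]
      rw [← Finset.sum_add_distrib]
      exact Finset.sum_congr rfl fun i _ => by rw [add_pow_char, mul_add]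
    simp only [Set.mem_setOf_eq] at *
    rw [hxy, hx, hy, add_zero]
  smul_mem' := by
    intro c x hx
    simp only [Set.mem_setOf_eq] at *
    have hcx : eval p a (c • x) = c ^ p * eval p a x := by
      simp only [eval, Pi.smul_apply, smul_eq_mul, Finset.mul_sum]
      exact Finset.sum_congr rfl fun i _ => by rw [mul_pow]; ring
    rw [hcx, hx, mul_zero]

/-- The defect `i₀` of a form: the dimension of its zero set. -/
noncomputable def defect (p : ℕ) [Fact p.Prime] {F : Type*} [Field F] [CharP F p]
    {ι : Type*} [Fintype ι] (a : ι → F) : ℕ :=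
  Module.finrank F (zeroSubmodule p a)

/-- Isometry of forms: a linear bijection carrying one form into the other. -/
def Isometric (p : ℕ) {F : Type*} [Field F] {ι κ : Type*} [Fintype ι] [Fintype κ]
    (a : ι → F) (b : κ → F) : Prop :=
  ∃ T : (ι → F) ≃ₗ[F] (κ → F), ∀ x, eval p a x = eval p b (T x)

/-- `a` is a subform of `b`. -/
def Subform (p : ℕ) {F : Type*} [Field F] {ι κ : Type*} [Fintype ι] [Fintype κ]
    (a : ι → F) (b : κ → F) : Prop :=
  ∃ T : (ι → F) →ₗ[F] (κ → F), Function.Injective T ∧ ∀ x, eval p a x = eval p b (T x)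

/-- Similarity of forms: `a ≃ c·b` for some scalar `c ≠ 0`. -/
def Similar (p : ℕ) {F : Type*} [Field F] {ι κ : Type*} [Fintype ι] [Fintype κ]
    (a : ι → F) (b : κ → F) : Prop :=
  ∃ c : F, c ≠ 0 ∧ Isometric p a (fun i => c * b i)

/-- Vishik equivalence: same dimension, and equal defects over every field
extension `E/F`. -/
def VishikEquiv (p : ℕ) [Fact p.Prime] {F : Type u} [Field F] [CharP F p]
    {ι κ : Type*} [Fintype ι] [Fintype κ] (a : ι → F) (b : κ → F) : Prop :=
  Fintype.card ι = Fintype.card κ ∧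
    ∀ (E : Type u) [Field E] [CharP E p] (f : F →+* E),
      defect p (f ∘ a) = defect p (f ∘ b)

/-- Weak Vishik equivalence: same dimension, and equal defects over every field
extension of the shape `E = F(α)` with `αᵖ ∈ F` (this includes `E = F`). -/
def WeakVishikEquiv (p : ℕ) [Fact p.Prime] {F : Type u} [Field F] [CharP F p]
    {ι κ : Type*} [Fintype ι] [Fintype κ] (a : ι → F) (b : κ → F) : Prop :=
  Fintype.card ι = Fintype.card κ ∧
    ∀ (E : Type u) [Field E] [CharP E p] (f : F →+* E) (α : E),
      α ^ p ∈ Set.range ⇑f →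
      Subfield.closure (insert α (Set.range ⇑f)) = ⊤ →
      defect p (f ∘ a) = defect p (f ∘ b)

/-- The set `Fᵖ` of `p`-th powers. -/
def pSet (p : ℕ) (F : Type*) [Field F] : Set F := Set.range fun x : F => x ^ p

/-- The subfield `Fᵖ` of `p`-th powers (in characteristic `p` the set of `p`-th
powers is already a subfield, so the closure adds nothing). -/
def pthSubfield (p : ℕ) (F : Type*) [Field F] : Subfield F :=
  Subfield.closure (pSet p F)

/-- The subfield `Fᵖ(s)` generated by a set `s` over `Fᵖ`. -/
def adjoin (p : ℕ) {F : Type*} [Field F] (s : Set F) : Subfield F :=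
  Subfield.closure (pSet p F ∪ s)

/-- The degree `[N : k]` of a subfield `N` over a subfield `k` (for `k ≤ N`,
the `k`-span of `N` in `F` is `N` itself, so this is the `k`-dimension of `N`). -/
noncomputable def degOver {F : Type*} [Field F] (k : Subfield F) (N : Subfield F) : ℕ :=
  Module.finrank k (Submodule.span k (N : Set F))

/-- The set `D_F(φ)` of values of the form. -/
def values (p : ℕ) {F : Type*} [CommRing F] {ι : Type*} [Fintype ι] (a : ι → F) : Set F :=
  Set.range (eval p a)

/-- The norm field `N_F(φ)`: the subfield generated over `Fᵖ` by all quotients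
of nonzero values of `φ`. -/
def normField (p : ℕ) {F : Type*} [Field F] {ι : Type*} [Fintype ι] (a : ι → F) : Subfield F :=
  adjoin p {z : F | ∃ u ∈ values p a, ∃ v ∈ values p a, u ≠ 0 ∧ v ≠ 0 ∧ z = u / v}

/-- The norm degree `ndeg_F(φ) = [N_F(φ) : Fᵖ]`. -/
noncomputable def ndeg (p : ℕ) {F : Type*} [Field F] {ι : Type*} [Fintype ι] (a : ι → F) : ℕ :=
  degOver (pthSubfield p F) (normField p a)

/-- An anisotropic form is minimal if `ndeg_F(φ) = p^(dim φ - 1)`. -/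
def Minimal (p : ℕ) {F : Type*} [Field F] {ι : Type*} [Fintype ι] (a : ι → F) : Prop :=
  Anisotropic p a ∧ ndeg p a = p ^ (Fintype.card ι - 1)

/-- The quasi-Pfister form `⟪b₁,…,bₙ⟫`: its coefficients are all products
`b₁^{e₁}⋯bₙ^{eₙ}` with `0 ≤ eᵢ ≤ p-1`. -/
def pfister (p : ℕ) {F : Type*} [CommRing F] {n : ℕ} (b : Fin n → F) :
    (Fin n → Fin p) → F :=
  fun e => ∏ i, b i ^ (e i : ℕ)

/-- A form is a quasi-Pfister form if it is isometric to some `⟪b₁,…,bₙ⟫`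
with all `bᵢ ∈ F×`. -/
def IsQuasiPfister (p : ℕ) {F : Type*} [Field F] {ι : Type*} [Fintype ι] (a : ι → F) : Prop :=
  ∃ (n : ℕ) (b : Fin n → F), (∀ i, b i ≠ 0) ∧ Isometric p a (pfister p b)

/-- `a` is a quasi-Pfister neighbor of the form `π`: `c·a ⊆ π` for some `c ≠ 0`
and `p · dim a > dim π`. -/
def IsNeighborOf (p : ℕ) {F : Type*} [Field F] {ι κ : Type*} [Fintype ι] [Fintype κ]
    (a : ι → F) (π : κ → F) : Prop :=
  ∃ c : F, c ≠ 0 ∧ Subform p (fun i => c * a i) π ∧ p * Fintype.card ι > Fintype.card κ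

/-- `a` is a quasi-Pfister neighbor (of some quasi-Pfister form). -/
def IsQPNeighbor (p : ℕ) {F : Type*} [Field F] {ι : Type*} [Fintype ι] (a : ι → F) : Prop :=
  ∃ (n : ℕ) (b : Fin n → F), (∀ i, b i ≠ 0) ∧ IsNeighborOf p a (pfister p b)

/-- `a` is a quasi-Pfister neighbor of codimension one of some anisotropic
quasi-Pfister form: `dim π - dim a = 1`. -/
def IsQPNeighborCodimOne (p : ℕ) {F : Type*} [Field F] {ι : Type*} [Fintype ι]
    (a : ι → F) : Prop :=
  ∃ (n : ℕ) (b : Fin n → F), (∀ i, b i ≠ 0) ∧ Anisotropic p (pfister p b) ∧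
    IsNeighborOf p a (pfister p b) ∧ Fintype.card ι + 1 = p ^ n

/-- Tensor product of diagonal forms: coefficients `aᵢ · bⱼ`. -/
def tensor (p : ℕ) {F : Type*} [CommRing F] {ι κ : Type*}
    (a : ι → F) (b : κ → F) : ι × κ → F :=
  fun ik => a ik.1 * b ik.2

/-- The set `G_F(φ) = {x ∈ F× : xφ ≃ φ} ∪ {0}` of similarity factors. -/
def simFactors (p : ℕ) {F : Type*} [Field F] {ι : Type*} [Fintype ι] (a : ι → F) : Set F :=
  {x | x ≠ 0 ∧ Isometric p (fun i => x * a i) a} ∪ {0}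

/-- `b` is the anisotropic part of `a`: `b` is anisotropic and
`a ≃ b ⊥ (m × ⟨0⟩)` for some `m`. -/
def IsAnisotropicPart (p : ℕ) {F : Type*} [Field F] {ι κ : Type*} [Fintype ι] [Fintype κ]
    (a : ι → F) (b : κ → F) : Prop :=
  Anisotropic p b ∧ ∃ m : ℕ, Isometric p a (Sum.elim b fun _ : Fin m => (0 : F))

/-- `⟪c₁,…,cₘ⟫` is (a representative of) the norm form of `a`:
`N_F(a) = Fᵖ(c₁,…,cₘ)` and `ndeg_F(a) = pᵐ`. -/
def IsNormForm (p : ℕ) {F : Type*} [Field F] {ι : Type*} [Fintype ι] (a : ι → F)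
    {m : ℕ} (c : Fin m → F) : Prop :=
  normField p a = adjoin p (Set.range c) ∧ ndeg p a = p ^ m

end QLF

/-!
Over `Fᵖ`, the value set `D_F(a)` of an anisotropic form `a` is the vector space with basis the
coefficients of `a`, and `a ⊗ ⟨1, x, …, x^(p-1)⟩` is isotropic iff `∑ xʲ vⱼ = 0` for some nonzero
`v ∈ D_F(a)ᵖ`. Divided by a nonzero `v_l`, such a relation is a linear dependence of
`1, x, …, x^(p-1)` over `N_F(a)`; since `xᵖ ∈ N_F(a)`, the degree of `x` over `N_F(a)` is `1` or
`p`, so `x ∈ N_F(a)`. Conversely, if `c·a ⊆ π = ⟪b⟫`, then `D_F(π)` is a field (it is spanned by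
monomials in `b` and `F` is algebraic over `Fᵖ`) containing `N_F(a)`, of `Fᵖ`-dimension at most
`dim π < p · dim a`; so for `x ∈ N_F(a)` the `Fᵖ`-linear map `w ↦ ∑ xʲ c wⱼ` from `D_F(a)ᵖ` into
`D_F(π)` has a nonzero kernel.
-/

namespace QLF

open Module

section CommRing

variable {p : ℕ} {F : Type*} [CommRing F] {ι κ : Type*} [Fintype ι] [Fintype κ]

theorem eval_zero (hp : p ≠ 0) (a : ι → F) : eval p a 0 = 0 := by
  simp [eval, zero_pow hp]

theorem eval_mul_left (c : F) (a x : ι → F) :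
    eval p (fun i => c * a i) x = c * eval p a x := by
  simp only [eval, Finset.mul_sum, mul_assoc]

theorem eval_tensor (a : ι → F) (c : κ → F) (z : ι × κ → F) :
    eval p (tensor p a c) z = ∑ k, c k * eval p a fun i => z (i, k) := by
  simp only [eval, tensor, Fintype.sum_prod_type_right, Finset.mul_sum]
  exact Finset.sum_congr rfl fun _ _ => Finset.sum_congr rfl fun _ _ => by ring

theorem Anisotropic.eq_zero_of_eval_eq_zero {a : ι → F} (ha : Anisotropic p a) {x : ι → F}
    (hx : eval p a x = 0) : x = 0 :=
  by_contra fun hx0 => ha ⟨x, hx0, hx⟩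

theorem isotropic_tensor_iff (hp : p ≠ 0) {a : ι → F} (ha : Anisotropic p a) (c : κ → F) :
    Isotropic p (tensor p a c) ↔
      ∃ v : κ → F, (∀ k, v k ∈ values p a) ∧ v ≠ 0 ∧ ∑ k, c k * v k = 0 := by
  constructor
  · rintro ⟨z, hz, hz0⟩
    refine ⟨fun k => eval p a fun i => z (i, k), fun k => ⟨_, rfl⟩, ?_, by rwa [← eval_tensor]⟩
    contrapose! hz
    ext ⟨i, k⟩
    exact congrFun (ha.eq_zero_of_eval_eq_zero (congrFun hz k)) i
  · rintro ⟨v, hv, hv0, hsum⟩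
    choose y hy using hv
    obtain ⟨k, hk⟩ := Function.ne_iff.mp hv0
    obtain ⟨i, hi⟩ : ∃ i, y k i ≠ 0 := by
      contrapose! hk
      rw [← hy k, show y k = 0 from funext hk, eval_zero hp, Pi.zero_apply]
    refine ⟨fun ik => y ik.2 ik.1, fun h => hi (congrFun h (i, k)), ?_⟩
    simpa only [eval_tensor, hy] using hsum

end CommRing

section Field

variable {p : ℕ} {F : Type*} [Field F] {ι : Type*} [Fintype ι]

theorem div_mem_normField {a : ι → F} {u v : F} (hu : u ∈ values p a) (hv : v ∈ values p a) :
    u / v ∈ normField p a := by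
  rcases eq_or_ne u 0 with rfl | hu0
  · simp
  rcases eq_or_ne v 0 with rfl | hv0
  · simp
  exact Subfield.subset_closure (Or.inr ⟨u, hu, v, hv, hu0, hv0, rfl⟩)

theorem normField_le {a : ι → F} {K : Subfield F} (hK : pSet p F ⊆ K) {c : F} (hc : c ≠ 0)
    (h : ∀ u ∈ values p a, c * u ∈ K) : normField p a ≤ K := by
  refine Subfield.closure_le.mpr (Set.union_subset hK ?_)
  rintro _ ⟨u, hu, v, hv, -, -, rfl⟩
  rw [← mul_div_mul_left u v hc]
  exact K.div_mem (h u hu) (h v hv)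

theorem Subform.values_subset {κ : Type*} [Fintype κ] {a : ι → F} {b : κ → F}
    (h : Subform p a b) : values p a ⊆ values p b := by
  obtain ⟨T, -, hT⟩ := h
  rintro _ ⟨y, rfl⟩
  exact ⟨T y, (hT y).symm⟩

theorem sum_smul_eq_eval (a : ι → F) (g : ι → pthSubfield p F) {t : ι → F}
    (ht : ∀ i, t i ^ p = g i) : ∑ i, g i • a i = eval p a t := by
  simp only [eval, Subfield.smul_def, smul_eq_mul, ht, mul_comm]

end Field

section CharP

variable {p : ℕ} [Fact p.Prime] {F : Type*} [Field F] [CharP F p] {ι : Type*}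

theorem pthSubfield_eq_fieldRange : pthSubfield p F = (frobenius F p).fieldRange := by
  rw [pthSubfield, ← Subfield.closure_eq (frobenius F p).fieldRange, RingHom.coe_fieldRange]
  rfl

theorem mem_pthSubfield_iff {u : F} : u ∈ pthSubfield p F ↔ ∃ t, t ^ p = u := by
  rw [pthSubfield_eq_fieldRange]
  rfl

theorem exists_pow_eq_coe (g : ι → pthSubfield p F) : ∃ t : ι → F, ∀ i, t i ^ p = g i :=
  ⟨fun i => (mem_pthSubfield_iff.mp (g i).2).choose,
    fun i => (mem_pthSubfield_iff.mp (g i).2).choose_spec⟩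

theorem values_eq_span [Fintype ι] (a : ι → F) :
    values p a = Submodule.span (pthSubfield p F) (Set.range a) := by
  ext u
  rw [SetLike.mem_coe, Submodule.mem_span_range_iff_exists_fun]
  constructor
  · rintro ⟨t, rfl⟩
    exact ⟨fun i => ⟨t i ^ p, mem_pthSubfield_iff.mpr ⟨t i, rfl⟩⟩,
      sum_smul_eq_eval a _ fun _ => rfl⟩
  · rintro ⟨g, rfl⟩
    obtain ⟨t, ht⟩ := exists_pow_eq_coe g
    exact ⟨t, (sum_smul_eq_eval a g ht).symm⟩

theorem Anisotropic.linearIndependent [Fintype ι] {a : ι → F} (ha : Anisotropic p a) :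
    LinearIndependent (pthSubfield p F) a := by
  refine Fintype.linearIndependent_iff.mpr fun g hg i => ?_
  obtain ⟨t, ht⟩ := exists_pow_eq_coe g
  have ht0 := ha.eq_zero_of_eval_eq_zero ((sum_smul_eq_eval a g ht).symm.trans hg)
  ext
  rw [← ht i, ht0, Pi.zero_apply, zero_pow (Fact.out : p.Prime).ne_zero, ZeroMemClass.coe_zero]

theorem linearIndependent_pow_of_pow_mem {K : Subfield F} {x : F} (hxp : x ^ p ∈ K)
    (hx : x ∉ K) : LinearIndependent K fun j : Fin p => x ^ (j : ℕ) := by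
  have hirr : Irreducible (Polynomial.X ^ p - Polynomial.C (⟨x ^ p, hxp⟩ : K)) := by
    refine X_pow_sub_C_irreducible_of_prime Fact.out fun y hy => hx ?_
    rw [← frobenius_inj F p (congrArg Subtype.val hy)]
    exact y.2
  have hroot : Polynomial.aeval x (Polynomial.X ^ p - Polynomial.C (⟨x ^ p, hxp⟩ : K)) = 0 := by
    simp only [map_sub, map_pow, Polynomial.aeval_X, Polynomial.aeval_C]
    exact sub_self _
  have hmin := minpoly.eq_of_irreducible_of_monic hirr hroot
    (Polynomial.monic_X_pow_sub_C _ (Fact.out : p.Prime).ne_zero)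
  have hdeg : (minpoly K x).natDegree = p := by
    rw [← hmin, Polynomial.natDegree_X_pow_sub_C]
  exact (linearIndependent_pow x).comp (Fin.cast hdeg.symm) (Fin.cast_injective _)

theorem mem_normField_of_isotropic_tensor [Fintype ι] {a : ι → F} (ha : Anisotropic p a) {x : F}
    (h : Isotropic p (tensor p a fun j : Fin p => x ^ (j : ℕ))) : x ∈ normField p a := by
  obtain ⟨v, hv, hv0, hsum⟩ := (isotropic_tensor_iff (Fact.out : p.Prime).ne_zero ha _).mp h
  obtain ⟨l, hl⟩ := Function.ne_iff.mp hv0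
  by_contra hx
  have hxp : x ^ p ∈ normField p a := Subfield.subset_closure (Or.inl ⟨x, rfl⟩)
  set g : Fin p → normField p a := fun j => ⟨v j / v l, div_mem_normField (hv j) (hv l)⟩
  have hdep : ∑ j, g j • x ^ (j : ℕ) = 0 := by
    rw [← zero_div (v l), ← hsum, Finset.sum_div]
    exact Finset.sum_congr rfl fun j _ => by rw [Subfield.smul_def, smul_eq_mul]; ring
  have hgl : g l = 0 := Fintype.linearIndependent_iff.mp
    (linearIndependent_pow_of_pow_mem (K := normField p a) hxp hx) g hdep l
  exact one_ne_zero ((div_self hl).symm.trans (congrArg Subtype.val hgl))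

end CharP

section Pfister

theorem pfister_mul_pfister {p : ℕ} (hp : 0 < p) {R : Type*} [CommRing R] {m : ℕ}
    (b : Fin m → R) (e f : Fin m → Fin p) :
    ∃ (r : R) (g : Fin m → Fin p), pfister p b e * pfister p b f = r ^ p * pfister p b g := by
  refine ⟨∏ i, b i ^ ((e i + f i : ℕ) / p), fun i => ⟨(e i + f i : ℕ) % p, Nat.mod_lt _ hp⟩, ?_⟩
  simp only [pfister, ← Finset.prod_pow, ← Finset.prod_mul_distrib, ← pow_mul, ← pow_add]
  exact Finset.prod_congr rfl fun i _ => by rw [Nat.div_add_mod']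

variable {p : ℕ} {F : Type*} [Field F]

theorem finrank_span_pfister_le {m : ℕ} (b : Fin m → F) :
    finrank (pthSubfield p F) (Submodule.span (pthSubfield p F) (Set.range (pfister p b))) ≤
      p ^ m :=
  (finrank_range_le_card _).trans (by simp)

variable [Fact p.Prime] [CharP F p]

theorem isAlgebraic_pthSubfield (x : F) : IsAlgebraic (pthSubfield p F) x := by
  refine ⟨Polynomial.X ^ p - Polynomial.C ⟨x ^ p, mem_pthSubfield_iff.mpr ⟨x, rfl⟩⟩,
    Polynomial.X_pow_sub_C_ne_zero (Fact.out : p.Prime).pos _, ?_⟩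
  simp only [map_sub, map_pow, Polynomial.aeval_X, Polynomial.aeval_C]
  exact sub_self _

theorem mul_mem_span_pfister {m : ℕ} (b : Fin m → F) {u v : F}
    (hu : u ∈ Submodule.span (pthSubfield p F) (Set.range (pfister p b)))
    (hv : v ∈ Submodule.span (pthSubfield p F) (Set.range (pfister p b))) :
    u * v ∈ Submodule.span (pthSubfield p F) (Set.range (pfister p b)) := by
  have huv := Submodule.mul_mem_mul hu hv
  rw [Submodule.span_mul_span] at huv
  refine Submodule.span_le.mpr ?_ huv
  rintro _ ⟨_, ⟨e, rfl⟩, _, ⟨f, rfl⟩, rfl⟩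
  obtain ⟨r, g, hrg⟩ := pfister_mul_pfister (Fact.out : p.Prime).pos b e f
  simp only [SetLike.mem_coe, hrg]
  exact Submodule.smul_mem _ (⟨r ^ p, mem_pthSubfield_iff.mpr ⟨r, rfl⟩⟩ : pthSubfield p F)
    (Submodule.subset_span ⟨g, rfl⟩)

def pfisterSubalgebra {m : ℕ} (b : Fin m → F) : Subalgebra (pthSubfield p F) F :=
  (Submodule.span (pthSubfield p F) (Set.range (pfister p b))).toSubalgebra
    (Submodule.subset_span ⟨fun _ => ⟨0, (Fact.out : p.Prime).pos⟩, by simp [pfister]⟩)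
    fun _ _ => mul_mem_span_pfister b

def pfisterField {m : ℕ} (b : Fin m → F) : IntermediateField (pthSubfield p F) F :=
  (pfisterSubalgebra b).toIntermediateField fun x hx =>
    (pfisterSubalgebra b).inv_mem_of_algebraic (x := ⟨x, hx⟩) (isAlgebraic_pthSubfield x)

theorem coe_pfisterField {m : ℕ} (b : Fin m → F) :
    (pfisterField b : Set F) = values p (pfister p b) := by
  rw [values_eq_span]
  rfl

end Pfister

section LinearAlgebra

variable {F : Type*} [Ring F] {k : Type*} [Field k] [Algebra k F]

theorem exists_ne_zero_sum_mul_eq_zero {κ : Type*} [Fintype κ] (V M : Submodule k F)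
    [FiniteDimensional k V] [FiniteDimensional k M] (f : κ → F)
    (hf : ∀ j, ∀ v ∈ V, f j * v ∈ M) (hdim : finrank k M < Fintype.card κ * finrank k V) :
    ∃ w : κ → F, (∀ j, w j ∈ V) ∧ w ≠ 0 ∧ ∑ j, f j * w j = 0 := by
  let Φ : (κ → V) →ₗ[k] F := ∑ j, LinearMap.mulLeft k (f j) ∘ₗ V.subtype ∘ₗ LinearMap.proj j
  have hΦ : ∀ w, Φ w = ∑ j, f j * w j := fun w => by simp [Φ]
  have hΦM : ∀ w, Φ w ∈ M := fun w => hΦ w ▸ M.sum_mem fun j _ => hf j _ (w j).2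
  obtain ⟨w, hw, hw0⟩ := (Submodule.ne_bot_iff _).mp
    (LinearMap.ker_ne_bot_of_finrank_lt (f := Φ.codRestrict M hΦM) (by
      rwa [Module.finrank_pi_fintype, Finset.sum_const, Finset.card_univ, smul_eq_mul]))
  refine ⟨fun j => w j, fun j => (w j).2, fun h => hw0 (funext fun j => Subtype.ext
    (congrFun h j)), ?_⟩
  rw [← hΦ]
  exact congrArg Subtype.val hw

end LinearAlgebra

section Neighbor

variable {p : ℕ} [Fact p.Prime] {F : Type*} [Field F] {ι : Type*} [Fintype ι]

theorem IsQuasiPfister.isQPNeighbor {a : ι → F} (h : IsQuasiPfister p a) : IsQPNeighbor p a := by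
  obtain ⟨m, b, hb, T, hT⟩ := h
  have hcard : Fintype.card ι = Fintype.card (Fin m → Fin p) := by simpa using T.finrank_eq
  refine ⟨m, b, hb, 1, one_ne_zero, ⟨T, T.injective, by simpa using hT⟩, ?_⟩
  rw [hcard]
  exact lt_mul_left Fintype.card_pos (Fact.out : p.Prime).one_lt

variable [CharP F p]

theorem isotropic_tensor_of_mem_normField {a : ι → F} (ha : Anisotropic p a)
    (hn : IsQPNeighbor p a) {x : F} (hx : x ∈ normField p a) :
    Isotropic p (tensor p a fun j : Fin p => x ^ (j : ℕ)) := by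
  obtain ⟨m, b, -, c, hc, hsub, hdim⟩ := hn
  set K := pfisterField b
  have hcK : ∀ u ∈ values p a, c * u ∈ K := fun u ⟨y, hy⟩ => by
    rw [← SetLike.mem_coe, coe_pfisterField]
    exact hsub.values_subset ⟨y, by rw [eval_mul_left, hy]⟩
  have hxK : x ∈ K := normField_le (K := K.toSubfield)
    (fun _ ⟨t, ht⟩ => K.algebraMap_mem ⟨_, mem_pthSubfield_iff.mpr ⟨t, ht⟩⟩) hc hcK hx
  set V := Submodule.span (pthSubfield p F) (Set.range a)
  set M := Submodule.span (pthSubfield p F) (Set.range (pfister p b))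
  have : FiniteDimensional (pthSubfield p F) V :=
    FiniteDimensional.span_of_finite _ (Set.finite_range _)
  have : FiniteDimensional (pthSubfield p F) M :=
    FiniteDimensional.span_of_finite _ (Set.finite_range _)
  have hV : values p a = V := values_eq_span a
  have hVM : ∀ j : Fin p, ∀ v ∈ V, c * x ^ (j : ℕ) * v ∈ M := fun j v hv => by
    rw [mul_comm c, mul_assoc]
    exact K.mul_mem (pow_mem hxK _) (hcK v (hV ▸ hv))
  have hdimVM :
      finrank (pthSubfield p F) M < Fintype.card (Fin p) * finrank (pthSubfield p F) V := by
    rw [finrank_span_eq_card ha.linearIndependent, Fintype.card_fin]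
    refine (finrank_span_pfister_le b).trans_lt ?_
    simpa using hdim
  obtain ⟨w, hwV, hw0, hw⟩ := exists_ne_zero_sum_mul_eq_zero V M _ hVM hdimVM
  refine (isotropic_tensor_iff (Fact.out : p.Prime).ne_zero ha _).mpr
    ⟨w, fun j => hV ▸ hwV j, hw0, ?_⟩
  simp_rw [mul_assoc, ← Finset.mul_sum] at hw
  exact (mul_eq_zero.mp hw).resolve_left hc

end Neighbor

end QLF

theorem stmt_15_general (p : ℕ) [Fact p.Prime] {F : Type u} [Field F] [CharP F p]
    {n : ℕ} (φ : Fin n → F) (hφan : QLF.Anisotropic p φ)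
    (hφ : QLF.IsQuasiPfister p φ ∨ QLF.IsQPNeighbor p φ)
    (x : F) :
    QLF.Isotropic p (QLF.tensor p φ fun j : Fin p => x ^ (j : ℕ)) ↔
      x ∈ QLF.normField p φ :=
  ⟨QLF.mem_normField_of_isotropic_tensor hφan,
    QLF.isotropic_tensor_of_mem_normField hφan (hφ.elim QLF.IsQuasiPfister.isQPNeighbor id)⟩

/-- Let `φ` be an anisotropic quasi-Pfister form or an anisotropic
quasi-Pfister neighbor over `F`, and `x ∈ F×`. Then `φ ⊗ ⟨1, x, …, x^(p-1)⟩` is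
isotropic iff `x ∈ N_F(φ)`. -/
theorem stmt_15 (p : ℕ) [Fact p.Prime] {F : Type u} [Field F] [CharP F p]
    {n : ℕ} (φ : Fin n → F) (hφan : QLF.Anisotropic p φ)
    (hφ : QLF.IsQuasiPfister p φ ∨ QLF.IsQPNeighbor p φ)
    (x : F) (hx : x ≠ 0) :
    QLF.Isotropic p (QLF.tensor p φ fun j : Fin p => x ^ (j : ℕ)) ↔
      x ∈ QLF.normField p φ :=
  stmt_15_general p φ hφan hφ x
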